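/- arXiv:math/0307143 — 3 statements merged into one kernel-verified Lean document; each statement's English description precedes it below -/
import Mathlib

section
/- Let C be a Brown category. Then the composite of any two phantom maps is zero: if u : X → Y and v : Y → Z are morphisms in C with h_u = 0 and h_v = 0, then v ∘ u = 0. -/
/-!
Formalization of statements from N. P. Strickland,
"Axiomatic stable homotopy --- a survey" (arXiv:math/0307143).
-/

open CategoryTheory CategoryTheory.Limits CategoryTheory.Pretriangulated

universe w v u

namespace AxStable

variable {C : Type u} [Category.{v} C]

section Compact

variable [Preadditive C]

/-- The canonical map `⊕ᵢ Hom(A, Xᵢ) →+ Hom(A, ∐ᵢ Xᵢ)`. -/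
noncomputable def coprodComparison {ι : Type w} (A : C) (X : ι → C) [HasCoproduct X] :
    DirectSum ι (fun i => A ⟶ X i) →+ (A ⟶ ∐ X) :=
  letI := Classical.decEq ι
  DirectSum.toAddMonoid fun i =>
    AddMonoidHom.mk' (fun g => g ≫ Sigma.ι X i) (fun _ _ => Preadditive.add_comp _ _ _ _ _ _)

variable [HasCoproducts.{v} C]

/-- An object `A` is compact (small) if the canonical map `⊕ᵢ Hom(A, Xᵢ) → Hom(A, ∐ᵢ Xᵢ)`
is bijective for every set-indexed family `X`. -/
def IsCompactObj (A : C) : Prop :=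
  ∀ (ι : Type v) (X : ι → C), Function.Bijective (coprodComparison A X)

variable (C) in
/-- The full subcategory `F` of compact objects of `C`. -/
abbrev Cpt := ObjectProperty.FullSubcategory (fun A : C => IsCompactObj A)

variable (C) in
/-- The inclusion `F ⥤ C` of the compact objects. -/
abbrev cptInclusion : Cpt C ⥤ C := ObjectProperty.ι _

/-- The restricted Yoneda functor `h` on objects: `h_X = Hom_C(-, X)` restricted to the
compact objects, an object of the category `A` of additive functors `Fᵒᵖ ⥤ Ab`. -/
noncomputable def hFunctor (X : C) : (Cpt C)ᵒᵖ ⥤ AddCommGrpCat.{v} :=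
  (cptInclusion C).op ⋙ preadditiveYoneda.obj X

/-- The restricted Yoneda functor `h` on morphisms. -/
noncomputable def hMap {X Y : C} (u : X ⟶ Y) : hFunctor X ⟶ hFunctor Y :=
  CategoryTheory.Functor.whiskerLeft _ (preadditiveYoneda.map u)

variable (C) in
/-- Fullness of the restricted Yoneda functor `h : C → A`: every natural transformation
`h_X ⟶ h_Y` is of the form `h_u` for a morphism `u : X ⟶ Y`. -/
def HIsFull : Prop :=
  ∀ (X Y : C) (φ : hFunctor X ⟶ hFunctor Y), ∃ u : X ⟶ Y, hMap u = φ

end Compact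

section Triangulated

variable [Preadditive C] [HasZeroObject C] [HasShift C ℤ]
  [∀ n : ℤ, (shiftFunctor C n).Additive] [Pretriangulated C] [HasCoproducts.{v} C]

variable (C) in
/-- `C` is compactly generated if there is a set `G` of compact objects such that any object
`X` with `Hom(Σⁿ A, X) = 0` for all `A ∈ G` and `n : ℤ` is a zero object. -/
def CompactlyGenerated : Prop :=
  ∃ G : Set C, (∀ A ∈ G, IsCompactObj A) ∧
    ∀ X : C, (∀ A ∈ G, ∀ n : ℤ, ∀ f : (shiftFunctor C n).obj A ⟶ X, f = 0) → IsZero X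

/-- A functor `H : Fᵒᵖ ⥤ Ab` is cohomological if it is additive and sends every distinguished
triangle `X ⟶ Y ⟶ Z ⟶ ΣX` with compact vertices to an exact sequence `H(Z) → H(Y) → H(X)`. -/
def IsCohomological (H : (Cpt C)ᵒᵖ ⥤ AddCommGrpCat.{v}) : Prop :=
  H.Additive ∧
  ∀ (T : Triangle C) (_ : T ∈ (distTriang C)) (h1 : IsCompactObj T.obj₁)
    (h2 : IsCompactObj T.obj₂) (h3 : IsCompactObj T.obj₃),
    Function.Exact
      (H.map (Quiver.Hom.op (show (⟨T.obj₂, h2⟩ : Cpt C) ⟶ ⟨T.obj₃, h3⟩ from ObjectProperty.homMk T.mor₂)))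
      (H.map (Quiver.Hom.op (show (⟨T.obj₁, h1⟩ : Cpt C) ⟶ ⟨T.obj₂, h2⟩ from ObjectProperty.homMk T.mor₁)))

end Triangulated

section Brown

variable [Preadditive C] [HasZeroObject C] [HasShift C ℤ]
  [∀ n : ℤ, (shiftFunctor C n).Additive] [Pretriangulated C] [HasCoproducts.{v} C]

variable (C) in
/-- A Brown category: a compactly generated triangulated category in which the restricted
Yoneda functor `h` is full and the functors isomorphic to some `h_X` are exactly the
cohomological ones. -/
def IsBrownCategory : Prop :=
  CompactlyGenerated C ∧ HIsFull C ∧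
    ∀ H : (Cpt C)ᵒᵖ ⥤ AddCommGrpCat.{v},
      ((∃ X : C, Nonempty (hFunctor X ≅ H)) ↔ IsCohomological H)

end Brown

/-!
Complete `u ≫ v` and `v` to distinguished triangles `X → Z → Q → ΣX` and `Y → Z → Q' → ΣY`
(with second maps `k` and `k'`) and let `ψ : Q ⟶ Q'` fill in the morphism of triangles
`(u, 𝟙 Z, ψ)`. As `v` is phantom, `h_{k'}` is a monomorphism; as `Σu` is phantom, the image of
`h_ψ` lies in that of `h_{k'}`, so `h_ψ` factors through `h_Z`, and by fullness the factor is
`h_r` for some `r : Q ⟶ Z`. Then `h_{k ≫ r} = 1`, which in a compactly generated category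
forces `k ≫ r` to be an isomorphism: its cone admits no nonzero map from a shifted generator.
Since `(u ≫ v) ≫ k = 0`, we get `u ≫ v = 0`.
-/

lemma exists_comp_eq_of_mono {D : Type*} [Category D] {F G H : D ⥤ AddCommGrpCat.{w}}
    (f : F ⟶ H) [Mono f] (g : G ⟶ H) (hg : ∀ d x, ∃ y, f.app d y = g.app d x) :
    ∃ ρ : G ⟶ F, ρ ≫ f = g := by
  have hf (d : D) : Function.Injective (f.app d) :=
    (AddCommGrpCat.mono_iff_injective _).1 ((NatTrans.mono_iff_mono_app f).1 inferInstance d)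
  choose s hs using hg
  refine ⟨{ app := fun d => AddCommGrpCat.ofHom
              { toFun := s d
                map_zero' := hf d (by simp [hs])
                map_add' := fun x y => hf d (by simp [hs]) }
            naturality := fun d d' φ => ?_ }, ?_⟩
  · ext x
    apply hf
    simp [hs, NatTrans.naturality_apply]
  · ext d x
    simp [hs]

section Compactness

variable {D : Type*} [Category.{v} D] [Preadditive C] [Preadditive D]
  [HasCoproducts.{v} C] [HasCoproducts.{v} D]

lemma coprodComparison_homAddEquiv {F : C ⥤ D} {G : D ⥤ C} (adj : F ⊣ G) [F.Additive]
    {ι : Type v} (A : C) (X : ι → D) (d : DirectSum ι fun i => F.obj A ⟶ X i) :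
    adj.homAddEquiv A (∐ X) (coprodComparison (F.obj A) X d) =
      coprodComparison A (fun i => G.obj (X i))
        (DFinsupp.mapRange.addEquiv (fun i => adj.homAddEquiv A (X i)) d) ≫
        sigmaComparison G X := by
  classical
  induction d using DirectSum.induction_on with
  | zero => simp
  | of i g =>
    have hmap : DFinsupp.mapRange.addEquiv (fun i => adj.homAddEquiv A (X i))
        (DirectSum.of _ i g) = DirectSum.of _ i (adj.homEquiv A (X i) g) :=
      DFinsupp.mapRange_single (hf := fun i => map_zero _)
    rw [hmap]
    simp [coprodComparison, DirectSum.toAddMonoid_of, Adjunction.homEquiv_unit]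
  | add d₁ d₂ h₁ h₂ => rw [map_add, map_add, h₁, h₂, map_add, map_add, Preadditive.add_comp]

lemma IsCompactObj.leftAdjoint_obj {F : C ⥤ D} {G : D ⥤ C} (adj : F ⊣ G) [F.Additive]
    [∀ ι : Type v, PreservesColimitsOfShape (Discrete ι) G] {A : C} (hA : IsCompactObj A) :
    IsCompactObj (F.obj A) := by
  intro ι X
  have hcomm : adj.homAddEquiv A (∐ X) ∘ coprodComparison (F.obj A) X =
      (asIso (sigmaComparison G X)).homToEquiv ∘ coprodComparison A (fun i => G.obj (X i)) ∘
        DFinsupp.mapRange.addEquiv (fun i => adj.homAddEquiv A (X i)) :=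
    funext (coprodComparison_homAddEquiv adj A X)
  rw [← (adj.homAddEquiv A (∐ X)).bijective.of_comp_iff', hcomm]
  exact (Equiv.bijective _).comp ((hA ι _).comp (AddEquiv.bijective _))

end Compactness

section RestrictedYoneda

variable [Preadditive C] [HasCoproducts.{v} C]

lemma hMap_id (X : C) : hMap (𝟙 X) = 𝟙 (hFunctor X) := by
  ext A a
  exact Category.comp_id a

lemma hMap_comp {X Y Z : C} (u : X ⟶ Y) (v : Y ⟶ Z) : hMap (u ≫ v) = hMap u ≫ hMap v := by
  ext A a
  exact (Category.assoc a u v).symm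

lemma hMap_zero (X Y : C) : hMap (0 : X ⟶ Y) = 0 := by
  ext A a
  exact comp_zero

lemma hMap_eq_hMap_iff {X Y : C} {f g : X ⟶ Y} :
    hMap f = hMap g ↔ ∀ A, IsCompactObj A → ∀ a : A ⟶ X, a ≫ f = a ≫ g := by
  refine ⟨fun h A hA a => congr_arg (fun φ => φ.app (Opposite.op ⟨A, hA⟩) a) h, fun h => ?_⟩
  ext A a
  exact h _ A.unop.property a

lemma hMap_eq_zero_iff {X Y : C} {f : X ⟶ Y} :
    hMap f = 0 ↔ ∀ A, IsCompactObj A → ∀ a : A ⟶ X, a ≫ f = 0 := by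
  simpa [hMap_zero] using hMap_eq_hMap_iff (f := f) (g := 0)

end RestrictedYoneda

section Shift

variable [Preadditive C] [HasShift C ℤ] [∀ n : ℤ, (shiftFunctor C n).Additive]
  [HasCoproducts.{v} C]

lemma IsCompactObj.shift {A : C} (hA : IsCompactObj A) (n : ℤ) :
    IsCompactObj (A⟦n⟧) :=
  hA.leftAdjoint_obj (F := shiftFunctor C n) (G := shiftFunctor C (-n))
    (shiftEquiv C n).toAdjunction

lemma hMap_shift_map {X Y : C} {f g : X ⟶ Y} (h : hMap f = hMap g) (n : ℤ) :
    hMap (f⟦n⟧') = hMap (g⟦n⟧') := by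
  rw [hMap_eq_hMap_iff] at h ⊢
  intro A hA a
  let adj := (shiftEquiv C n).symm.toAdjunction
  obtain ⟨a, rfl⟩ := (adj.homEquiv A X).surjective a
  calc _ = adj.homEquiv A Y (a ≫ f) := (adj.homEquiv_naturality_right a f).symm
    _ = adj.homEquiv A Y (a ≫ g) := congrArg _ (h _ (hA.shift (-n)) a)
    _ = _ := adj.homEquiv_naturality_right a g

end Shift

section Triangulated

variable [Preadditive C] [HasZeroObject C] [HasShift C ℤ]
  [∀ n : ℤ, (shiftFunctor C n).Additive] [Pretriangulated C] [HasCoproducts.{v} C]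

lemma mono_hMap_mor₂ {T : Triangle C} (hT : T ∈ distTriang C) (h₁ : hMap T.mor₁ = 0) :
    Mono (hMap T.mor₂) := by
  have (A : (Cpt C)ᵒᵖ) : Mono ((hMap T.mor₂).app A) := by
    refine (AddCommGrpCat.mono_iff_injective _).2 ((injective_iff_map_eq_zero _).2 ?_)
    intro (a : A.unop.obj ⟶ T.obj₂) ha
    obtain ⟨b, rfl⟩ := Triangle.coyoneda_exact₂ T hT a ha
    exact hMap_eq_zero_iff.1 h₁ _ A.unop.property b
  exact NatTrans.mono_of_mono_app _

lemma exists_comp_hMap_mor₂_eq {T : Triangle C} (hT : T ∈ distTriang C) (h₁ : hMap T.mor₁ = 0)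
    {W : C} (ψ : W ⟶ T.obj₃) (hψ : hMap (ψ ≫ T.mor₃) = 0) :
    ∃ ρ : hFunctor W ⟶ hFunctor T.obj₂, ρ ≫ hMap T.mor₂ = hMap ψ := by
  have := mono_hMap_mor₂ hT h₁
  refine exists_comp_eq_of_mono _ _ fun A (a : A.unop.obj ⟶ W) => ?_
  obtain ⟨b, hb⟩ := Triangle.coyoneda_exact₃ T hT (a ≫ ψ)
    (by rw [Category.assoc]; exact hMap_eq_zero_iff.1 hψ _ A.unop.property a)
  exact ⟨b, hb.symm⟩

lemma isIso_of_hMap_eq_id (hC : CompactlyGenerated C) {Z : C} {θ : Z ⟶ Z}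
    (hθ : hMap θ = 𝟙 _) : IsIso θ := by
  obtain ⟨G, hGc, hGgen⟩ := hC
  obtain ⟨R, x, y, hT⟩ := distinguished_cocone_triangle θ
  have hθ₀ : hMap θ = hMap (𝟙 Z) := hθ.trans (hMap_id Z).symm
  have hθ₁ := hMap_eq_hMap_iff.1 (hMap_shift_map hθ₀ 1)
  rw [hMap_eq_hMap_iff] at hθ₀
  simp only [CategoryTheory.Functor.map_id, Category.comp_id] at hθ₀ hθ₁
  refine (Triangle.isZero₃_iff_isIso₁ _ hT).1 (hGgen R fun A hA n f => ?_)
  have hAn := (hGc A hA).shift n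
  have hyθ : y ≫ θ⟦1⟧' = 0 := comp_distTriang_mor_zero₃₁ _ hT
  have hθx : θ ≫ x = 0 := comp_distTriang_mor_zero₁₂ _ hT
  have hy : f ≫ y = 0 := by
    rw [← hθ₁ _ hAn (f ≫ y), Category.assoc, hyθ, comp_zero]
  obtain ⟨g, rfl⟩ : ∃ g : A⟦n⟧ ⟶ Z, f = g ≫ x := Triangle.coyoneda_exact₃ _ hT f hy
  rw [← hθ₀ _ hAn g, Category.assoc, hθx, comp_zero]

end Triangulated

variable [Preadditive C] [HasZeroObject C] [HasShift C ℤ]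
  [∀ n : ℤ, (shiftFunctor C n).Additive] [Pretriangulated C] [IsTriangulated C]
  [HasCoproducts.{v} C]

/-- in a Brown category, the composite of two phantom maps is zero. -/
theorem phantom_comp_phantom_eq_zero (hBrown : IsBrownCategory C) {X Y Z : C}
    (u : X ⟶ Y) (v : Y ⟶ Z) (hu : hMap u = 0) (hv : hMap v = 0) :
    u ≫ v = 0 := by
  obtain ⟨hC, hFull, -⟩ := hBrown
  obtain ⟨Q, k, l, hT⟩ := distinguished_cocone_triangle (u ≫ v)
  obtain ⟨Q', k', l', hT'⟩ := distinguished_cocone_triangle v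
  obtain ⟨ψ, hkψ, hψl'⟩ : ∃ ψ : Q ⟶ Q', k ≫ ψ = 𝟙 Z ≫ k' ∧ l ≫ u⟦1⟧' = ψ ≫ l' :=
    complete_distinguished_triangle_morphism _ _ hT hT' u (𝟙 Z) (Category.comp_id _)
  rw [Category.id_comp] at hkψ
  have hψ : hMap (ψ ≫ l') = 0 := by
    rw [← hψl', hMap_comp, hMap_shift_map (hu.trans (hMap_zero X Y).symm), Functor.map_zero,
      hMap_zero, comp_zero]
  have : Mono (hMap k') := mono_hMap_mor₂ hT' hv
  obtain ⟨ρ, hρ⟩ : ∃ ρ, ρ ≫ hMap k' = hMap ψ := exists_comp_hMap_mor₂_eq hT' hv ψ hψ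
  obtain ⟨r, rfl⟩ := hFull Q Z ρ
  have hkr : hMap (k ≫ r) = 𝟙 _ := by
    rw [← cancel_mono (hMap k'), hMap_comp, Category.assoc, hρ, ← hMap_comp, hkψ,
      Category.id_comp]
  have := isIso_of_hMap_eq_id hC hkr
  have hk : (u ≫ v) ≫ k = 0 := comp_distTriang_mor_zero₁₂ _ hT
  rw [← cancel_mono (k ≫ r), zero_comp, ← Category.assoc, hk, zero_comp]

end AxStable
end

section
/- Let C be a triangulated category with set-indexed coproducts equipped with a symmetric monoidal structure with unit S and product ∧ (smash), such that for every object X the functor X ∧ − commutes with the shift Σ, sends distinguished triangles to distinguished triangles, and preserves set-indexed coproducts; assume that S is compact and that the only localizing subcategory of C containing S is C itself. Then every localizing subcategory D of C is an ideal: if X ∈ D and Y is any object of C, then Y ∧ X ∈ D. -/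
/-!
Formalization of statements from N. P. Strickland,
"Axiomatic stable homotopy --- a survey" (arXiv:math/0307143).
-/

open CategoryTheory CategoryTheory.Limits CategoryTheory.Pretriangulated

universe w v u

namespace AxStable

variable {C : Type u} [Category.{v} C]

section Localizing

variable [Preadditive C] [HasZeroObject C] [HasShift C ℤ]
  [∀ n : ℤ, (shiftFunctor C n).Additive] [Pretriangulated C] [HasCoproducts.{v} C]

variable (C) in
/-- A localizing subcategory of `C`, identified with its set of objects: a full triangulated
subcategory closed under isomorphisms, retracts and set-indexed coproducts. -/
structure IsLocalizing (P : Set C) : Prop where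
  zero_mem : ∀ X : C, IsZero X → X ∈ P
  mem_of_iso : ∀ {X Y : C}, (X ≅ Y) → X ∈ P → Y ∈ P
  shift_mem : ∀ (n : ℤ) {X : C}, X ∈ P → (shiftFunctor C n).obj X ∈ P
  ext₃ : ∀ (T : Triangle C), T ∈ (distTriang C) → T.obj₁ ∈ P → T.obj₂ ∈ P → T.obj₃ ∈ P
  retract_mem : ∀ {X Y : C}, (∃ (s : Y ⟶ X) (r : X ⟶ Y), s ≫ r = 𝟙 Y) → X ∈ P → Y ∈ P
  coprod_mem : ∀ {ι : Type v} (X : ι → C), (∀ i, X i ∈ P) → (∐ X) ∈ P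

end Localizing

section Preimage

variable {C' : Type*} [Category.{v} C']
  [Preadditive C] [HasZeroObject C] [HasShift C ℤ]
  [∀ n : ℤ, (shiftFunctor C n).Additive] [Pretriangulated C] [HasCoproducts.{v} C]
  [Preadditive C'] [HasZeroObject C'] [HasShift C' ℤ]
  [∀ n : ℤ, (shiftFunctor C' n).Additive] [Pretriangulated C'] [HasCoproducts.{v} C']

theorem IsLocalizing.preimage {P : Set C'} (hP : IsLocalizing C' P) (F : C ⥤ C')
    [F.CommShift ℤ] [F.IsTriangulated]
    (hF : ∀ ι : Type v, PreservesColimitsOfShape (Discrete ι) F) :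
    IsLocalizing C (F.obj ⁻¹' P) where
  zero_mem X hX := hP.zero_mem _ (F.map_isZero hX)
  mem_of_iso e hX := hP.mem_of_iso (F.mapIso e) hX
  shift_mem n X hX := hP.mem_of_iso ((F.commShiftIso n).app X).symm (hP.shift_mem n hX)
  ext₃ T hT h₁ h₂ := hP.ext₃ _ (F.map_distinguished T hT) h₁ h₂
  retract_mem := by
    rintro X Y ⟨s, r, hsr⟩ hX
    exact hP.retract_mem ⟨F.map s, F.map r, by rw [← F.map_comp, hsr, F.map_id]⟩ hX
  coprod_mem {ι} X hX := by
    have := hF ι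
    exact hP.mem_of_iso (PreservesCoproduct.iso F X).symm (hP.coprod_mem _ hX)

end Preimage

open MonoidalCategory

variable [Preadditive C] [HasZeroObject C] [HasShift C ℤ]
  [∀ n : ℤ, (shiftFunctor C n).Additive] [Pretriangulated C] [IsTriangulated C]
  [HasCoproducts.{v} C] [MonoidalCategory C] [SymmetricCategory C]
  [∀ X : C, (MonoidalCategory.tensorLeft X).CommShift ℤ]
  [∀ X : C, (MonoidalCategory.tensorLeft X).IsTriangulated]

theorem localizing_isIdeal_general
    (hpres : ∀ (X : C) (ι : Type v),
      PreservesColimitsOfShape (Discrete ι) (MonoidalCategory.tensorLeft X))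
    (hgen : ∀ P : Set C, IsLocalizing C P → (𝟙_ C) ∈ P → P = Set.univ) :
    ∀ D : Set C, IsLocalizing C D → ∀ X ∈ D, ∀ Y : C, (Y ⊗ X) ∈ D := by
  intro D hD X hX Y
  have hXD : IsLocalizing C ((tensorLeft X).obj ⁻¹' D) := hD.preimage _ (hpres X)
  have hunit : 𝟙_ C ∈ (tensorLeft X).obj ⁻¹' D := hD.mem_of_iso (ρ_ X).symm hX
  have hY : X ⊗ Y ∈ D := Set.eq_univ_iff_forall.mp (hgen _ hXD hunit) Y
  exact hD.mem_of_iso (β_ X Y) hY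

/-- if the unit `S` is compact and generates `C`, then every localizing
subcategory of `C` is an ideal. -/
theorem localizing_isIdeal
    (hpres : ∀ (X : C) (ι : Type v),
      PreservesColimitsOfShape (Discrete ι) (MonoidalCategory.tensorLeft X))
    (hS : IsCompactObj (𝟙_ C))
    (hgen : ∀ P : Set C, IsLocalizing C P → (𝟙_ C) ∈ P → P = Set.univ) :
    ∀ D : Set C, IsLocalizing C D → ∀ X ∈ D, ∀ Y : C, (Y ⊗ X) ∈ D :=
  localizing_isIdeal_general hpres hgen

end AxStable
end

section
/- Let C be a triangulated category equipped with a symmetric monoidal structure with unit S and product ∧ (smash), such that for every object X the functor X ∧ − commutes with the shift and sends distinguished triangles to distinguished triangles. If i : I → S and j : J → S are ideals, then the composite I ∧ J → S ∧ S ≅ S of i ∧ j with the unitor isomorphism is again an ideal. -/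
/-!
Let `rightAct X j : X ∧ J ⟶ X` be the action of `j : J ⟶ S` on `X`; by symmetry, `j` is an ideal
exactly when it acts trivially on `S/J`. The action of `i ∧ j` is that of `i` followed by that of
`j`. The octahedral axiom applied to `I ∧ J ⟶ I ⟶ S` gives a distinguished triangle
`I ∧ S/J ⟶ S/(I ∧ J) ⟶ S/I`. Since `i` acts trivially on `S/I`, its action on `S/(I ∧ J)` factors
through `I ∧ S/J`, on which `j` acts trivially.
-/

open CategoryTheory CategoryTheory.Limits CategoryTheory.Pretriangulated

universe w v u

namespace AxStable

variable {C : Type u} [Category.{v} C]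

section SmashIdeal

open MonoidalCategory

variable [Preadditive C] [HasZeroObject C] [HasShift C ℤ]
  [∀ n : ℤ, (shiftFunctor C n).Additive] [Pretriangulated C] [MonoidalCategory C]

/-- A morphism `i : I ⟶ S` is an ideal if for every distinguished triangle
`I ⟶ S ⟶ S/I ⟶ ΣI` extending `i`, the composite `I ∧ S/I ⟶ S ∧ S/I ≅ S/I` is zero. -/
def IsSmashIdeal {I : C} (i : I ⟶ 𝟙_ C) : Prop :=
  ∀ (Q : C) (q : 𝟙_ C ⟶ Q) (δ : Q ⟶ (I⟦(1:ℤ)⟧ : C)),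
    Triangle.mk i q δ ∈ (distTriang C) → (i ▷ Q) ≫ (λ_ Q).hom = 0

end SmashIdeal

open MonoidalCategory

section Monoidal

variable [MonoidalCategory C]

def rightAct (X : C) {J : C} (j : J ⟶ 𝟙_ C) : X ⊗ J ⟶ X := (X ◁ j) ≫ (ρ_ X).hom

lemma rightAct_naturality {X Y J : C} (f : X ⟶ Y) (j : J ⟶ 𝟙_ C) :
    (f ▷ J) ≫ rightAct Y j = rightAct X j ≫ f := by
  rw [rightAct, rightAct, ← whisker_exchange_assoc, rightUnitor_naturality, Category.assoc]

lemma rightAct_tensor (X Y : C) {J : C} (j : J ⟶ 𝟙_ C) :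
    rightAct (X ⊗ Y) j = (α_ X Y J).hom ≫ X ◁ rightAct Y j := by
  simp [rightAct]

lemma rightAct_tensor_eq_zero [HasZeroMorphisms C] (X : C) [(tensorLeft X).PreservesZeroMorphisms]
    {Y J : C} {j : J ⟶ 𝟙_ C} (h : rightAct Y j = 0) : rightAct (X ⊗ Y) j = 0 := by
  rw [rightAct_tensor, h]
  change _ ≫ (tensorLeft X).map 0 = 0
  rw [Functor.map_zero, comp_zero]

lemma tensorHom_comp_leftUnitor_eq_rightAct_comp {I J : C} (i : I ⟶ 𝟙_ C) (j : J ⟶ 𝟙_ C) :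
    (i ⊗ₘ j) ≫ (λ_ (𝟙_ C)).hom = rightAct I j ≫ i := by
  rw [rightAct, tensorHom_def', unitors_equal, Category.assoc, Category.assoc,
    rightUnitor_naturality]

lemma rightAct_tensorHom_comp_leftUnitor (X : C) {I J : C} (i : I ⟶ 𝟙_ C) (j : J ⟶ 𝟙_ C) :
    rightAct X ((i ⊗ₘ j) ≫ (λ_ (𝟙_ C)).hom) =
      (α_ X I J).inv ≫ (rightAct X i ▷ J) ≫ rightAct X j := by
  rw [tensorHom_comp_leftUnitor_eq_rightAct_comp]
  simp only [rightAct, MonoidalCategory.whiskerLeft_comp, comp_whiskerRight, Category.assoc]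
  rw [← whisker_exchange_assoc, ← whisker_exchange_assoc,
    ← associator_inv_naturality_right_assoc]
  congr 1
  monoidal

end Monoidal

lemma rightAct_eq_braiding_comp [MonoidalCategory C] [BraidedCategory C] (X : C) {I : C}
    (i : I ⟶ 𝟙_ C) : rightAct X i = (β_ X I).hom ≫ (i ▷ X) ≫ (λ_ X).hom := by
  rw [rightAct, ← braiding_leftUnitor, BraidedCategory.braiding_naturality_right_assoc]

section Pretriangulated

variable [Preadditive C] [HasZeroObject C] [HasShift C ℤ]
  [∀ n : ℤ, (shiftFunctor C n).Additive] [Pretriangulated C] [MonoidalCategory C]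

lemma isSmashIdeal_iff_rightAct_eq_zero [BraidedCategory C] {I : C} (i : I ⟶ 𝟙_ C) :
    IsSmashIdeal i ↔ ∀ (Q : C) (q : 𝟙_ C ⟶ Q) (δ : Q ⟶ I⟦(1 : ℤ)⟧),
      Triangle.mk i q δ ∈ distTriang C → rightAct Q i = 0 := by
  simp only [IsSmashIdeal, rightAct_eq_braiding_comp, Preadditive.IsIso.comp_left_eq_zero]

lemma rightAct_tensorHom_comp_leftUnitor_eq_zero (T : Triangle C) (hT : T ∈ distTriang C)
    {I J : C} (i : I ⟶ 𝟙_ C) (j : J ⟶ 𝟙_ C)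
    (hj : rightAct T.obj₁ j = 0) (hi : rightAct T.obj₃ i = 0) :
    rightAct T.obj₂ ((i ⊗ₘ j) ≫ (λ_ (𝟙_ C)).hom) = 0 := by
  obtain ⟨w, hw⟩ := Triangle.coyoneda_exact₂ T hT (rightAct T.obj₂ i) (by
    rw [← rightAct_naturality, hi, comp_zero])
  rw [rightAct_tensorHom_comp_leftUnitor, hw, comp_whiskerRight]
  simp only [Category.assoc]
  rw [rightAct_naturality, hj, zero_comp, comp_zero, comp_zero]

lemma rightAct_mem_distTriang (X : C) [(tensorLeft X).CommShift ℤ]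
    [(tensorLeft X).IsTriangulated] {J B : C} {j : J ⟶ 𝟙_ C} {p : 𝟙_ C ⟶ B}
    {d : B ⟶ J⟦(1 : ℤ)⟧} (h : Triangle.mk j p d ∈ distTriang C) :
    Triangle.mk (rightAct X j) ((ρ_ X).inv ≫ X ◁ p)
      ((X ◁ d) ≫ ((tensorLeft X).commShiftIso (1 : ℤ)).hom.app J) ∈ distTriang C := by
  refine isomorphic_distinguished _ ((tensorLeft X).map_distinguished _ h) _
    (Triangle.isoMk _ _ (Iso.refl _) (ρ_ X).symm (Iso.refl _) ?_ ?_ ?_) <;>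
  dsimp [Functor.mapTriangle, Triangle.mk] <;> simp [rightAct]

end Pretriangulated

variable [Preadditive C] [HasZeroObject C] [HasShift C ℤ]
  [∀ n : ℤ, (shiftFunctor C n).Additive] [Pretriangulated C] [IsTriangulated C]
  [MonoidalCategory C] [SymmetricCategory C]
  [∀ X : C, (MonoidalCategory.tensorLeft X).CommShift ℤ]
  [∀ X : C, (MonoidalCategory.tensorLeft X).IsTriangulated]

/-- the smash product of two ideals `i : I ⟶ S` and `j : J ⟶ S`, namely the
composite `I ∧ J ⟶ S ∧ S ≅ S`, is again an ideal. -/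
theorem isSmashIdeal_smash {I J : C} (i : I ⟶ 𝟙_ C) (j : J ⟶ 𝟙_ C)
    (hi : IsSmashIdeal i) (hj : IsSmashIdeal j) :
    IsSmashIdeal ((i ⊗ₘ j) ≫ (λ_ (𝟙_ C)).hom) := by
  rw [isSmashIdeal_iff_rightAct_eq_zero] at hi hj ⊢
  intro Q q δ hQ
  obtain ⟨A, p, d, hA⟩ := distinguished_cocone_triangle i
  obtain ⟨B, pB, dB, hB⟩ := distinguished_cocone_triangle j
  let O := Triangulated.someOctahedron (tensorHom_comp_leftUnitor_eq_rightAct_comp i j).symm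
    (rightAct_mem_distTriang I hB) hA hQ
  exact rightAct_tensorHom_comp_leftUnitor_eq_zero _ O.mem i j
    (rightAct_tensor_eq_zero I (hj B pB dB hB)) (hi A p d hA)

end AxStable
end
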